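/- arXiv:math/0104274 — 3 statements merged into one kernel-verified Lean document; each statement's English description precedes it below -/
import Mathlib

section
/- Define R₁ = -p₁² - p₂² + p₁p₂ + q₁ + q₂ and R₂ = -p₁p₂² + p₁²p₂ - p₂q₁ + p₁q₂ in ℂ[p₁,p₂,q₁,q₂]. With the Poisson bracket {f,g} = -Σᵢ qᵢ(∂f/∂pᵢ ∂g/∂qᵢ - ∂g/∂pᵢ ∂f/∂qᵢ), one has {R₁, R₂} = 0. -/
open MvPolynomial

namespace Stmt10

/-- Variables: p₁ = X 0, p₂ = X 1, q₁ = X 2, q₂ = X 3. -/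
noncomputable def poisson (f g : MvPolynomial (Fin 4) ℂ) : MvPolynomial (Fin 4) ℂ :=
  -(X 2 * (pderiv 0 f * pderiv 2 g - pderiv 0 g * pderiv 2 f)
    + X 3 * (pderiv 1 f * pderiv 3 g - pderiv 1 g * pderiv 3 f))

/-- The quantum cohomology relations of F₁,₂(ℂ³) Poisson-commute: {R₁,R₂} = 0. -/
theorem stmt_10 :
    poisson (-(X 0) ^ 2 - (X 1) ^ 2 + X 0 * X 1 + X 2 + X 3)
        (-(X 0) * (X 1) ^ 2 + (X 0) ^ 2 * X 1 - X 1 * X 2 + X 0 * X 3) = 0 := by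
  unfold poisson
  simp [pderiv_X, Pi.single_apply]
  ring

end Stmt10
end

section
/- Let a₁,a₂,b₁,b₂,b₃ : ℝ → ℝ be differentiable functions satisfying the Toda equations ȧ₁=a₁(b₁-b₂), ȧ₂=a₂(b₂-b₃), ḃ₁=-a₁, ḃ₂=a₁-a₂, ḃ₃=a₂. Then g = b₁b₂+b₂b₃+b₃b₁-a₁-a₂ and h = b₁b₂b₃-b₃a₁-b₁a₂ are constant in t. -/
/-- For the n = 3 Toda lattice, g = b₁b₂+b₂b₃+b₃b₁-a₁-a₂ and
h = b₁b₂b₃-b₃a₁-b₁a₂ are first integrals. -/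
theorem stmt_13 (a₁ a₂ b₁ b₂ b₃ : ℝ → ℝ)
    (ha₁ : ∀ t, HasDerivAt a₁ (a₁ t * (b₁ t - b₂ t)) t)
    (ha₂ : ∀ t, HasDerivAt a₂ (a₂ t * (b₂ t - b₃ t)) t)
    (hb₁ : ∀ t, HasDerivAt b₁ (-(a₁ t)) t)
    (hb₂ : ∀ t, HasDerivAt b₂ (a₁ t - a₂ t) t)
    (hb₃ : ∀ t, HasDerivAt b₃ (a₂ t) t) :
    (∀ s t : ℝ,
      b₁ s * b₂ s + b₂ s * b₃ s + b₃ s * b₁ s - a₁ s - a₂ s =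
      b₁ t * b₂ t + b₂ t * b₃ t + b₃ t * b₁ t - a₁ t - a₂ t) ∧
    (∀ s t : ℝ,
      b₁ s * b₂ s * b₃ s - b₃ s * a₁ s - b₁ s * a₂ s =
      b₁ t * b₂ t * b₃ t - b₃ t * a₁ t - b₁ t * a₂ t) := by
  have hg : ∀ t, HasDerivAt
      (fun t => b₁ t * b₂ t + b₂ t * b₃ t + b₃ t * b₁ t - a₁ t - a₂ t) 0 t := by
    intro t
    have := ((((((hb₁ t).mul (hb₂ t)).add ((hb₂ t).mul (hb₃ t))).add
      ((hb₃ t).mul (hb₁ t))).sub (ha₁ t)).sub (ha₂ t))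
    exact this.congr_deriv (by ring)
  have hh : ∀ t, HasDerivAt
      (fun t => b₁ t * b₂ t * b₃ t - b₃ t * a₁ t - b₁ t * a₂ t) 0 t := by
    intro t
    have := ((((hb₁ t).mul (hb₂ t)).mul (hb₃ t)).sub ((hb₃ t).mul (ha₁ t))).sub
      ((hb₁ t).mul (ha₂ t))
    exact this.congr_deriv (by rw [Pi.mul_apply]; ring)
  constructor <;> intro s t
  · exact is_const_of_deriv_eq_zero (fun x => (hg x).differentiableAt) (fun x => (hg x).deriv) s t
  · exact is_const_of_deriv_eq_zero (fun x => (hh x).differentiableAt) (fun x => (hh x).deriv) s t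
end

section
/- The ℤ-algebras ℤ[x₁,x₄]/⟨x₁², x₄² - k·x₁x₄⟩ and ℤ[x₁,x₄]/⟨x₁², x₄² - (k+2)·x₁x₄⟩ are isomorphic, via the map sending x₁ ↦ x₁ and x₄ ↦ x₄ - x₁. -/
open MvPolynomial

namespace Stmt17

/-- Variables: x₁ = X 0, x₄ = X 1.  The ideal ⟨x₁², x₄² - k·x₁x₄⟩. -/
noncomputable def I (k : ℕ) : Ideal (MvPolynomial (Fin 2) ℤ) :=
  Ideal.span {(X 0) ^ 2, (X 1) ^ 2 - (k : MvPolynomial (Fin 2) ℤ) * (X 0 * X 1)}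

noncomputable def φ : MvPolynomial (Fin 2) ℤ →ₐ[ℤ] MvPolynomial (Fin 2) ℤ :=
  aeval ![X 0, X 1 - X 0]

noncomputable def ψ : MvPolynomial (Fin 2) ℤ →ₐ[ℤ] MvPolynomial (Fin 2) ℤ :=
  aeval ![X 0, X 1 + X 0]

noncomputable def eA : MvPolynomial (Fin 2) ℤ ≃ₐ[ℤ] MvPolynomial (Fin 2) ℤ :=
  AlgEquiv.ofAlgHom φ ψ
    (by
      apply MvPolynomial.algHom_ext
      intro i
      fin_cases i <;> simp [φ, ψ])
    (by
      apply MvPolynomial.algHom_ext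
      intro i
      fin_cases i <;> simp [φ, ψ])

lemma key (k : ℕ) : I (k + 2) = (I k).map (eA : MvPolynomial (Fin 2) ℤ →+* _) := by
  have h0 : eA ((X 0 : MvPolynomial (Fin 2) ℤ) ^ 2) = (X 0) ^ 2 := by
    simp [eA, φ]
  have e0 : eA (X 0 : MvPolynomial (Fin 2) ℤ) = X 0 := by simp [eA, φ]
  have e1 : eA (X 1 : MvPolynomial (Fin 2) ℤ) = X 1 - X 0 := by simp [eA, φ]
  have h1 : eA ((X 1 : MvPolynomial (Fin 2) ℤ) ^ 2 - (k : MvPolynomial (Fin 2) ℤ) * (X 0 * X 1))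
      = ((X 1) ^ 2 - ((k : ℕ) + 2 : MvPolynomial (Fin 2) ℤ) * (X 0 * X 1))
        + ((k : MvPolynomial (Fin 2) ℤ) + 1) * (X 0) ^ 2 := by
    simp only [map_sub, map_mul, map_pow, map_natCast, e0, e1]
    ring
  rw [show I (k+2) = Ideal.span {(X 0 : MvPolynomial (Fin 2) ℤ) ^ 2,
    (X 1) ^ 2 - ((k+2 : ℕ) : MvPolynomial (Fin 2) ℤ) * (X 0 * X 1)} from rfl,
    show I k = Ideal.span {(X 0 : MvPolynomial (Fin 2) ℤ) ^ 2,
    (X 1) ^ 2 - ((k : ℕ) : MvPolynomial (Fin 2) ℤ) * (X 0 * X 1)} from rfl, Ideal.map_span, Set.image_insert_eq, Set.image_singleton]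
  simp only [show (((eA : MvPolynomial (Fin 2) ℤ ≃ₐ[ℤ] _) : MvPolynomial (Fin 2) ℤ →+* _) : MvPolynomial (Fin 2) ℤ → _) = eA from rfl, h0, h1]
  apply le_antisymm <;> rw [Ideal.span_le] <;> intro x hx <;>
    simp only [Set.mem_insert_iff, Set.mem_singleton_iff] at hx <;> rcases hx with rfl | rfl
  · exact Ideal.subset_span (Or.inl rfl)
  · rw [show (X 1 : MvPolynomial (Fin 2) ℤ) ^ 2 - ((k + 2 : ℕ) : MvPolynomial (Fin 2) ℤ) *
        (X 0 * X 1) = (((X 1) ^ 2 - ((k : MvPolynomial (Fin 2) ℤ) + 2) * (X 0 * X 1))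
        + ((k : MvPolynomial (Fin 2) ℤ) + 1) * (X 0) ^ 2)
        - ((k : MvPolynomial (Fin 2) ℤ) + 1) * (X 0) ^ 2 by push_cast; ring]
    exact Ideal.sub_mem _ (Ideal.subset_span (Or.inr rfl))
      (Ideal.mul_mem_left _ _ (Ideal.subset_span (Or.inl rfl)))
  · exact Ideal.subset_span (Or.inl rfl)
  · push_cast
    refine Ideal.add_mem _ (Ideal.subset_span (Or.inr rfl)) (Ideal.mul_mem_left _ _
      (Ideal.subset_span (Or.inl rfl)))

/-- ℤ[x₁,x₄]/⟨x₁², x₄²-k·x₁x₄⟩ ≅ ℤ[x₁,x₄]/⟨x₁², x₄²-(k+2)·x₁x₄⟩ via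
x₁ ↦ x₁, x₄ ↦ x₄ - x₁. -/
theorem stmt_17 (k : ℕ) :
    ∃ e : (MvPolynomial (Fin 2) ℤ ⧸ I k) ≃ₐ[ℤ] (MvPolynomial (Fin 2) ℤ ⧸ I (k + 2)),
      e (Ideal.Quotient.mk (I k) (X 0)) = Ideal.Quotient.mk (I (k + 2)) (X 0) ∧
      e (Ideal.Quotient.mk (I k) (X 1)) =
        Ideal.Quotient.mk (I (k + 2)) (X 1) - Ideal.Quotient.mk (I (k + 2)) (X 0) := by
  refine ⟨Ideal.quotientEquivAlg (I k) (I (k + 2)) eA (key k), ?_, ?_⟩ <;>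
    simp [Ideal.quotientEquivAlg, Ideal.quotientEquiv, eA, φ]

end Stmt17
end
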